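/- arXiv:2304.07227 — 7 statements merged into one kernel-verified Lean document; each statement's English description precedes it below -/
import Mathlib

section
/- Let (a_n/b_n, c_n/d_n) be the Farey pair at depth n in the Farey pair tree, and for i = 0,…,n let (a_i/b_i, c_i/d_i) denote the Farey pairs along the path from the root to this node. Then all the numbers a_i, b_i, c_i, d_i are bounded by (n+1)(a_n + b_n). -/
def fareyStep (P : (ℕ × ℕ) × (ℕ × ℕ)) (bit : Bool) : (ℕ × ℕ) × (ℕ × ℕ) :=
  if bit then ((P.1.1 + P.2.1, P.1.2 + P.2.2), P.2)
  else (P.1, (P.1.1 + P.2.1, P.1.2 + P.2.2))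

/-- The Farey pair tree: `F(ε) = (0/1, 1/1)`, and if `F(σ) = (a/b, c/d)` then
`F(σ0) = (a/b, (a+c)/(b+d))` and `F(σ1) = ((a+c)/(b+d), c/d)`. -/
def fareyTree (σ : List Bool) : (ℕ × ℕ) × (ℕ × ℕ) :=
  σ.foldl fareyStep ((0, 1), (1, 1))

/-!
Each step replaces one endpoint of the current pair by the mediant, so every numerator and
denominator is nondecreasing along a path and it suffices to bound those of the last pair
`(a/b, c/d)`. Reading pairs of fractions as vectors in `ℕ × ℕ`, induction along the path gives
`(c, d) ≤ (1, 1) + n • (a, b)`, and `b ≥ 1` turns this into `c, d ≤ (n + 1) * (a + b)`.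
-/

@[simp]
lemma fareyStep_true (P : (ℕ × ℕ) × (ℕ × ℕ)) : fareyStep P true = (P.1 + P.2, P.2) := rfl

@[simp]
lemma fareyStep_false (P : (ℕ × ℕ) × (ℕ × ℕ)) : fareyStep P false = (P.1, P.1 + P.2) := rfl

lemma le_fareyStep (P : (ℕ × ℕ) × (ℕ × ℕ)) (b : Bool) : P ≤ fareyStep P b := by
  cases b <;> simp [Prod.le_def]

lemma le_foldl_fareyStep (l : List Bool) (P : (ℕ × ℕ) × (ℕ × ℕ)) : P ≤ l.foldl fareyStep P := by
  induction l generalizing P with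
  | nil => rfl
  | cons b l ih => exact (le_fareyStep P b).trans (ih _)

@[simp]
lemma fareyTree_nil : fareyTree [] = ((0, 1), (1, 1)) := rfl

lemma fareyTree_append (σ τ : List Bool) :
    fareyTree (σ ++ τ) = τ.foldl fareyStep (fareyTree σ) :=
  List.foldl_append

lemma fareyTree_take_le (σ : List Bool) (i : ℕ) : fareyTree (σ.take i) ≤ fareyTree σ := by
  conv_rhs => rw [← List.take_append_drop i σ, fareyTree_append]
  exact le_foldl_fareyStep _ _

lemma one_le_fareyTree_fst_snd (σ : List Bool) : 1 ≤ (fareyTree σ).1.2 := by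
  simpa [Prod.le_def] using (fareyTree_take_le σ 0).1.2

lemma fareyTree_snd_le (σ : List Bool) :
    (fareyTree σ).2 ≤ (1, 1) + σ.length • (fareyTree σ).1 := by
  induction σ using List.reverseRecOn with
  | nil => simp
  | append_singleton σ b ih =>
    rw [fareyTree_append, List.foldl_cons, List.foldl_nil, List.length_append,
      List.length_singleton]
    generalize fareyTree σ = P at ih ⊢
    obtain ⟨L, R⟩ := P
    cases b
    · calc L + R ≤ L + ((1, 1) + σ.length • L) := by gcongr
        _ = (1, 1) + (σ.length + 1) • L := by rw [succ_nsmul]; abel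
    · calc R ≤ (1, 1) + σ.length • L := ih
        _ ≤ (1, 1) + (σ.length + 1) • (L + R) := by gcongr <;> simp

theorem farey_path_bound_general (σ : List Bool) (i : ℕ) :
    (fareyTree (σ.take i)).1.1 ≤ (σ.length + 1) * ((fareyTree σ).1.1 + (fareyTree σ).1.2) ∧
    (fareyTree (σ.take i)).1.2 ≤ (σ.length + 1) * ((fareyTree σ).1.1 + (fareyTree σ).1.2) ∧
    (fareyTree (σ.take i)).2.1 ≤ (σ.length + 1) * ((fareyTree σ).1.1 + (fareyTree σ).1.2) ∧
    (fareyTree (σ.take i)).2.2 ≤ (σ.length + 1) * ((fareyTree σ).1.1 + (fareyTree σ).1.2) := by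
  obtain ⟨⟨ha, hb⟩, hc, hd⟩ := fareyTree_take_le σ i
  obtain ⟨hc', hd'⟩ := fareyTree_snd_le σ
  have hb₁ := one_le_fareyTree_fst_snd σ
  simp only [Prod.fst_add, Prod.snd_add, Prod.smul_fst, Prod.smul_snd, smul_eq_mul] at hc' hd'
  refine ⟨ha.trans ?_, hb.trans ?_, hc.trans (hc'.trans ?_), hd.trans (hd'.trans ?_)⟩ <;> nlinarith

/-- All numerators and denominators of the Farey pairs along the
path from the root to a node at depth `n` with left fraction `a_n/b_n` are bounded
by `(n+1) * (a_n + b_n)`. -/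
theorem farey_path_bound (σ : List Bool) (i : ℕ) (hi : i ≤ σ.length) :
    (fareyTree (σ.take i)).1.1 ≤ (σ.length + 1) * ((fareyTree σ).1.1 + (fareyTree σ).1.2) ∧
    (fareyTree (σ.take i)).1.2 ≤ (σ.length + 1) * ((fareyTree σ).1.1 + (fareyTree σ).1.2) ∧
    (fareyTree (σ.take i)).2.1 ≤ (σ.length + 1) * ((fareyTree σ).1.1 + (fareyTree σ).1.2) ∧
    (fareyTree (σ.take i)).2.2 ≤ (σ.length + 1) * ((fareyTree σ).1.1 + (fareyTree σ).1.2) :=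
  farey_path_bound_general σ i
end

section
/- Let α be an irrational number in (0,1), let C : ℕ⁺ → ℚ satisfy |C(n) − α| < 1/n for all n, and let q ∈ ℚ. Then there exists n with |C(n) − q| > 1/n, and for the least such n: if q < C(n) then q < α, and if q > C(n) then q > α. -/
/-!
Since `α` is irrational, `q ≠ α`; once `2 / n < |q - α|`, the approximation `C n` lies within `1/n`
of `α` and hence more than `1/n` from `q`, so the set of such `n` is nonempty. For any `n` with
`|C n - α| < 1/n < |C n - q|`, the point `C n` separates `q` from `α` strictly, so `q` lies on the
same side of `α` as it does of `C n`.
-/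

section LinearOrderedAddCommGroup

variable {G : Type*} [AddCommGroup G] [LinearOrder G] [IsOrderedAddMonoid G] {a c x ε : G}

theorem lt_of_abs_sub_lt_of_lt_abs_sub_of_lt (ha : |c - a| < ε) (hx : ε < |c - x|) (hxc : x < c) :
    x < a := by
  rw [abs_of_pos (sub_pos.mpr hxc)] at hx
  exact (sub_lt_sub_iff_left c).mp ((abs_sub_lt_iff.mp ha).1.trans hx)

theorem lt_of_abs_sub_lt_of_lt_abs_sub_of_gt (ha : |c - a| < ε) (hx : ε < |c - x|) (hcx : c < x) :
    a < x := by
  rw [abs_sub_comm] at ha hx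
  rw [abs_of_pos (sub_pos.mpr hcx)] at hx
  exact (sub_lt_sub_iff_right c).mp ((abs_sub_lt_iff.mp ha).1.trans hx)

end LinearOrderedAddCommGroup

theorem exists_one_div_lt_abs_sub_of_ne {K : Type*} [Field K] [LinearOrder K] [IsStrictOrderedRing K]
    [Archimedean K] {c : ℕ → K} {a x : K} (hc : ∀ n : ℕ, 1 ≤ n → |c n - a| < 1 / n) (hx : x ≠ a) :
    ∃ n : ℕ, 1 ≤ n ∧ 1 / (n : K) < |c n - x| := by
  obtain ⟨k, hk⟩ := exists_nat_one_div_lt (half_pos (abs_pos.mpr (sub_ne_zero.mpr hx)))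
  refine ⟨k + 1, Nat.le_add_left 1 k, ?_⟩
  have hck := hc (k + 1) (Nat.le_add_left 1 k)
  push_cast at hck ⊢
  calc 1 / ((k : K) + 1) < |x - a| - 1 / ((k : K) + 1) := by linarith
    _ ≤ |x - a| - |c (k + 1) - a| := by linarith
    _ ≤ |c (k + 1) - x| := by
      linarith [abs_sub_le x (c (k + 1)) a, abs_sub_comm x (c (k + 1))]

theorem cauchy_to_dedekind_general (α : ℝ) (hirr : Irrational α)
    (C : ℕ → ℚ) (hC : ∀ n : ℕ, 1 ≤ n → |(C n : ℝ) - α| < 1 / n) (q : ℚ) :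
    ∃ n : ℕ, 1 ≤ n ∧ 1 / (n : ℚ) < |C n - q| ∧
      (∀ m : ℕ, 1 ≤ m → m < n → ¬(1 / (m : ℚ) < |C m - q|)) ∧
      (q < C n → (q : ℝ) < α) ∧ (C n < q → α < (q : ℝ)) := by
  have far_iff (n : ℕ) : 1 / (n : ℚ) < |C n - q| ↔ 1 / (n : ℝ) < |(C n : ℝ) - q| := by
    rw [← Rat.cast_lt (K := ℝ)]
    push_cast
    rfl
  have hex : ∃ n : ℕ, 1 ≤ n ∧ 1 / (n : ℚ) < |C n - q| := by
    simpa only [far_iff] using exists_one_div_lt_abs_sub_of_ne hC (hirr.ne_rat q).symm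
  classical
  obtain ⟨hn, hfar⟩ := Nat.find_spec hex
  rw [far_iff] at hfar
  refine ⟨Nat.find hex, hn, (far_iff _).mpr hfar,
    fun m hm hmn hmfar => Nat.find_min hex hmn ⟨hm, hmfar⟩, fun hlt => ?_, fun hgt => ?_⟩
  · exact lt_of_abs_sub_lt_of_lt_abs_sub_of_lt (hC _ hn) hfar (by exact_mod_cast hlt)
  · exact lt_of_abs_sub_lt_of_lt_abs_sub_of_gt (hC _ hn) hfar (by exact_mod_cast hgt)

/-- If `C` is a Cauchy sequence for an irrational `α ∈ (0,1)` and
`q ∈ ℚ`, then there is `n ≥ 1` with `|C(n) - q| > 1/n`, and for the least such `n`: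
if `q < C(n)` then `q < α`, and if `q > C(n)` then `q > α`. -/
theorem cauchy_to_dedekind (α : ℝ) (hirr : Irrational α) (h0 : 0 < α) (h1 : α < 1)
    (C : ℕ → ℚ) (hC : ∀ n : ℕ, 1 ≤ n → |(C n : ℝ) - α| < 1 / n) (q : ℚ) :
    ∃ n : ℕ, 1 ≤ n ∧ 1 / (n : ℚ) < |C n - q| ∧
      (∀ m : ℕ, 1 ≤ m → m < n → ¬(1 / (m : ℚ) < |C m - q|)) ∧
      (q < C n → (q : ℝ) < α) ∧ (C n < q → α < (q : ℝ)) :=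
  cauchy_to_dedekind_general α hirr C hC q
end

section
/- Let C be a Cauchy sequence for an irrational α ∈ (0,1), and define D : ℤ × ℕ⁺ → {0,1} by D(p,q) = 0 if C(q) ≤ p/q and D(p,q) = 1 if C(q) > p/q. Then D is a fuzzy Dedekind cut for α: D(p,q) = 0 implies α < (p+1)/q, and D(p,q) = 1 implies (p−1)/q < α. -/
section ApproximationThreshold

variable {G : Type*} [AddCommGroup G] [LinearOrder G] [IsOrderedAddMonoid G] {a b c ε : G}

lemma lt_add_of_abs_sub_lt_of_le (h : |c - a| < ε) (hcb : c ≤ b) : a < b + ε :=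
  (sub_lt_iff_lt_add'.mp (abs_sub_lt_iff.mp h).2).trans_le (add_le_add_left hcb ε)

lemma sub_lt_of_abs_sub_lt_of_lt (h : |c - a| < ε) (hbc : b < c) : b - ε < a :=
  (sub_lt_sub_right hbc ε).trans (sub_lt_comm.mp (abs_sub_lt_iff.mp h).1)

end ApproximationThreshold

theorem cauchy_to_fuzzy_general (α : ℝ)
    (C : ℕ → ℚ) (hC : ∀ n : ℕ, 1 ≤ n → |(C n : ℝ) - α| < 1 / n) :
    ∀ (p : ℤ) (q : ℕ), 1 ≤ q →
      (C q ≤ (p : ℚ) / q → α < ((p : ℝ) + 1) / q) ∧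
      ((p : ℚ) / q < C q → ((p : ℝ) - 1) / q < α) := by
  intro p q hq
  refine ⟨fun hle => ?_, fun hlt => ?_⟩
  · rw [add_div]
    exact lt_add_of_abs_sub_lt_of_le (hC q hq) (by exact_mod_cast hle)
  · rw [sub_div]
    exact sub_lt_of_abs_sub_lt_of_lt (hC q hq) (by exact_mod_cast hlt)

/-- If `C` is a Cauchy sequence for an irrational `α ∈ (0,1)`, then
the function `D(p,q)` which is `0` if `C(q) ≤ p/q` and `1` if `C(q) > p/q` is a
fuzzy Dedekind cut for `α`: `D(p,q) = 0` implies `α < (p+1)/q`, and `D(p,q) = 1`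
implies `(p-1)/q < α`. -/
theorem cauchy_to_fuzzy (α : ℝ) (hirr : Irrational α) (h0 : 0 < α) (h1 : α < 1)
    (C : ℕ → ℚ) (hC : ∀ n : ℕ, 1 ≤ n → |(C n : ℝ) - α| < 1 / n) :
    ∀ (p : ℤ) (q : ℕ), 1 ≤ q →
      (C q ≤ (p : ℚ) / q → α < ((p : ℝ) + 1) / q) ∧
      ((p : ℚ) / q < C q → ((p : ℝ) - 1) / q < α) :=
  cauchy_to_fuzzy_general α C hC
end

section
/- Let α ∈ (0,1) be irrational with a fuzzy Dedekind cut D. Define S : ℕ⁺ → {−1,0,1} by S(1) = 1 and, for n ≥ 1, with s_n = Σ_{i=1}^n S(i)2^{-i} = a_n 2^{-n}: S(n+1) = −1 if D(2a_n, 2^{n+1}) = 0 and D(4a_n−1, 2^{n+2}) = 0; S(n+1) = 0 if D(2a_n, 2^{n+1}) = 0 and D(4a_n−1, 2^{n+2}) = 1, or if D(2a_n, 2^{n+1}) = 1 and D(4a_n+1, 2^{n+2}) = 0; S(n+1) = 1 if D(2a_n, 2^{n+1}) = 1 and D(4a_n+1, 2^{n+2}) = 1. Then α = Σ_{i=1}^∞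 S(i)2^{-i}; in fact s_n − 2^{-n} < α < s_n + 2^{-n} for all n ≥ 1. -/
/-- Given a fuzzy Dedekind cut `D` of an irrational `α ∈ (0,1)`, the
signed digit sequence `S` defined by the four cases (with `s_n = Σ_{i=1}^n S(i)2^{-i}
= a_n 2^{-n}`) satisfies `s_n - 2^{-n} < α < s_n + 2^{-n}` for all `n ≥ 1`, and hence
`α = Σ_{i=1}^∞ S(i) 2^{-i}`. -/
theorem fuzzy_to_signed (α : ℝ) (hirr : Irrational α) (h0 : 0 < α) (h1 : α < 1)
    (D : ℤ → ℕ → ℕ)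
    (hD01 : ∀ p q, D p q = 0 ∨ D p q = 1)
    (hD0 : ∀ (p : ℤ) (q : ℕ), 0 < q → D p q = 0 → α < ((p : ℝ) + 1) / q)
    (hD1 : ∀ (p : ℤ) (q : ℕ), 0 < q → D p q = 1 → ((p : ℝ) - 1) / q < α)
    (S : ℕ → ℤ) (a : ℕ → ℤ)
    (hS1 : S 1 = 1)
    (ha : ∀ n : ℕ, (a n : ℚ) / 2 ^ n = ∑ i ∈ Finset.Icc 1 n, (S i : ℚ) / 2 ^ i)
    (hcase1 : ∀ n : ℕ, 1 ≤ n →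
      D (2 * a n) (2 ^ (n + 1)) = 0 → D (4 * a n - 1) (2 ^ (n + 2)) = 0 → S (n + 1) = -1)
    (hcase2 : ∀ n : ℕ, 1 ≤ n →
      D (2 * a n) (2 ^ (n + 1)) = 0 → D (4 * a n - 1) (2 ^ (n + 2)) = 1 → S (n + 1) = 0)
    (hcase3 : ∀ n : ℕ, 1 ≤ n →
      D (2 * a n) (2 ^ (n + 1)) = 1 → D (4 * a n + 1) (2 ^ (n + 2)) = 1 → S (n + 1) = 1)
    (hcase4 : ∀ n : ℕ, 1 ≤ n →
      D (2 * a n) (2 ^ (n + 1)) = 1 → D (4 * a n + 1) (2 ^ (n + 2)) = 0 → S (n + 1) = 0) :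
    (∀ n : ℕ, 1 ≤ n →
      (∑ i ∈ Finset.Icc 1 n, (S i : ℝ) / 2 ^ i) - 1 / 2 ^ n < α ∧
      α < (∑ i ∈ Finset.Icc 1 n, (S i : ℝ) / 2 ^ i) + 1 / 2 ^ n) ∧
    HasSum (fun i : ℕ => (S (i + 1) : ℝ) / 2 ^ (i + 1)) α := by
  set sR : ℕ → ℝ := fun n => ∑ i ∈ Finset.Icc 1 n, (S i : ℝ) / 2 ^ i with hsR
  have haR : ∀ n, (a n : ℝ) / 2 ^ n = sR n := by
    intro n
    have h := congrArg (fun x : ℚ => (x : ℝ)) (ha n)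
    push_cast at h
    exact h
  have key : ∀ n : ℕ, 1 ≤ n → sR n - 1 / 2 ^ n < α ∧ α < sR n + 1 / 2 ^ n := by
    intro n hn
    induction n, hn using Nat.le_induction with
    | base =>
        have hb : sR 1 = 1 / 2 := by simp [hsR, hS1]
        rw [hb]
        constructor
        · norm_num; linarith
        · norm_num; linarith
    | succ n hn IH =>
        have hsucc : sR (n + 1) = sR n + (S (n + 1) : ℝ) / 2 ^ (n + 1) := by
          rw [hsR]
          exact Finset.sum_Icc_succ_top (by omega) _
        have hpos1 : (0:ℕ) < 2 ^ (n + 1) := Nat.pow_pos (by norm_num)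
        have hpos2 : (0:ℕ) < 2 ^ (n + 2) := Nat.pow_pos (by norm_num)
        have hhalf : (1:ℝ) / 2 ^ (n + 1) + 1 / 2 ^ (n + 1) = 1 / 2 ^ n := by
          rw [pow_succ]; field_simp; ring
        rcases hD01 (2 * a n) (2 ^ (n + 1)) with h | h
        · have hup : α < sR n + 1 / 2 ^ (n + 1) := by
            calc α < (((2 * a n : ℤ) : ℝ) + 1) / ((2 ^ (n + 1) : ℕ) : ℝ) := hD0 _ _ hpos1 h
              _ = sR n + 1 / 2 ^ (n + 1) := by
                  rw [← haR n]; push_cast; rw [pow_succ]; field_simp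
          rcases hD01 (4 * a n - 1) (2 ^ (n + 2)) with h' | h'
          · have hS := hcase1 n hn h h'
            have hα : α < sR n := by
              calc α < (((4 * a n - 1 : ℤ) : ℝ) + 1) / ((2 ^ (n + 2) : ℕ) : ℝ) :=
                    hD0 _ _ hpos2 h'
                _ = sR n := by
                    rw [← haR n]; push_cast; rw [pow_succ, pow_succ]; field_simp; ring
            rw [hsucc, hS]
            push_cast
            simp only [neg_div]
            constructor
            · linarith [IH.1]
            · linarith
          · have hS := hcase2 n hn h h'
            have hlow : sR n - 1 / 2 ^ (n + 1) < α := by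
              calc sR n - 1 / 2 ^ (n + 1)
                  = (((4 * a n - 1 : ℤ) : ℝ) - 1) / ((2 ^ (n + 2) : ℕ) : ℝ) := by
                    rw [← haR n]; push_cast; rw [pow_succ, pow_succ]; field_simp; ring
                _ < α := hD1 _ _ hpos2 h'
            rw [hsucc, hS]
            push_cast
            simp only [zero_div, add_zero]
            constructor
            · linarith
            · linarith
        · have hlow : sR n - 1 / 2 ^ (n + 1) < α := by
            calc sR n - 1 / 2 ^ (n + 1)
                = (((2 * a n : ℤ) : ℝ) - 1) / ((2 ^ (n + 1) : ℕ) : ℝ) := by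
                  rw [← haR n]; push_cast; rw [pow_succ]; field_simp
              _ < α := hD1 _ _ hpos1 h
          rcases hD01 (4 * a n + 1) (2 ^ (n + 2)) with h' | h'
          · have hS := hcase4 n hn h h'
            have hup : α < sR n + 1 / 2 ^ (n + 1) := by
              calc α < (((4 * a n + 1 : ℤ) : ℝ) + 1) / ((2 ^ (n + 2) : ℕ) : ℝ) :=
                    hD0 _ _ hpos2 h'
                _ = sR n + 1 / 2 ^ (n + 1) := by
                    rw [← haR n]; push_cast; rw [pow_succ, pow_succ]; field_simp; ring
            rw [hsucc, hS]
            push_cast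
            simp only [zero_div, add_zero]
            constructor
            · linarith
            · linarith
          · have hS := hcase3 n hn h h'
            have hα : sR n < α := by
              calc sR n = (((4 * a n + 1 : ℤ) : ℝ) - 1) / ((2 ^ (n + 2) : ℕ) : ℝ) := by
                    rw [← haR n]; push_cast; rw [pow_succ, pow_succ]; field_simp; ring
                _ < α := hD1 _ _ hpos2 h'
            rw [hsucc, hS]
            push_cast
            constructor
            · linarith
            · linarith [IH.2]
  refine ⟨key, ?_⟩
  have hSb : ∀ i : ℕ, |(S (i + 1) : ℝ)| ≤ 1 := by
    intro i
    rcases Nat.eq_zero_or_pos i with rfl | hi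
    · simp [hS1]
    · rcases hD01 (2 * a i) (2 ^ (i + 1)) with h | h <;>
        [rcases hD01 (4 * a i - 1) (2 ^ (i + 2)) with h' | h';
         rcases hD01 (4 * a i + 1) (2 ^ (i + 2)) with h' | h']
      · rw [hcase1 i hi h h']; norm_num
      · rw [hcase2 i hi h h']; norm_num
      · rw [hcase4 i hi h h']; norm_num
      · rw [hcase3 i hi h h']; norm_num
  have hsum : Summable fun i : ℕ => (S (i + 1) : ℝ) / 2 ^ (i + 1) := by
    apply Summable.of_abs
    apply Summable.of_nonneg_of_le (fun i => abs_nonneg _) (fun i => ?_) summable_geometric_two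
    rw [abs_div, abs_pow, abs_two]
    calc |(S (i + 1) : ℝ)| / 2 ^ (i + 1) ≤ 1 / 2 ^ (i + 1) :=
          (div_le_div_iff_of_pos_right (by positivity)).mpr (hSb i)
      _ ≤ (1 / 2 : ℝ) ^ i := by
          rw [show (1:ℝ) / 2 ^ (i + 1) = (1 / 2) ^ (i + 1) by rw [div_pow, one_pow]]
          exact pow_le_pow_of_le_one (by norm_num) (by norm_num) (Nat.le_succ i)
  rw [hsum.hasSum_iff_tendsto_nat]
  have heq : ∀ N : ℕ, ∑ i ∈ Finset.range N, (S (i + 1) : ℝ) / 2 ^ (i + 1) = sR N := by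
    intro N
    show _ = ∑ i ∈ Finset.Icc 1 N, (S i : ℝ) / 2 ^ i
    rw [show Finset.Icc 1 N = Finset.Ico 1 (N + 1) from rfl, Finset.sum_Ico_eq_sum_range]
    refine Finset.sum_congr (by norm_num) fun i _ => by rw [add_comm]
  simp only [heq]
  have hgeo : Filter.Tendsto (fun N : ℕ => (1:ℝ) / 2 ^ N) Filter.atTop (nhds 0) := by
    simp only [← one_div_pow]
    exact tendsto_pow_atTop_nhds_zero_of_lt_one (by norm_num) (by norm_num)
  apply tendsto_of_tendsto_of_tendsto_of_le_of_le' (g := fun N : ℕ => α - 1 / 2 ^ N)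
    (h := fun N : ℕ => α + 1 / 2 ^ N)
  · simpa using Filter.Tendsto.const_sub α hgeo
  · simpa using Filter.Tendsto.const_add α hgeo
  · filter_upwards [Filter.eventually_ge_atTop 1] with N hN
    linarith [(key N hN).2]
  · filter_upwards [Filter.eventually_ge_atTop 1] with N hN
    linarith [(key N hN).1]
end

section
/- Let α ∈ (0,1) be irrational. A reduced fraction p/q is a left best approximant of α if and only if p/q occurs among the left endpoints a_0/b_0, a_1/b_1, a_2/b_2, … of the Farey intervals along the unique infinite path through the Farey pair tree whose intervals all contain α. -/
/-- Invariant along the Farey tree: determinant 1 and positive denominators. -/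
def FareyInv (P : (ℕ × ℕ) × (ℕ × ℕ)) : Prop :=
  P.1.2 * P.2.1 = P.1.1 * P.2.2 + 1 ∧ 0 < P.1.2 ∧ 0 < P.2.2

lemma fareyStep_inv (P : (ℕ × ℕ) × (ℕ × ℕ)) (b : Bool) (h : FareyInv P) :
    FareyInv (fareyStep P b) := by
  obtain ⟨hdet, hb, hd⟩ := h
  cases b <;> simp [fareyStep, FareyInv] at * <;>
    constructor <;> try omega
  · rw [Nat.mul_add, hdet]; ring
  · rw [Nat.add_mul, hdet]; ring

lemma fareyFoldl_inv (l : List Bool) (P : (ℕ × ℕ) × (ℕ × ℕ)) (h : FareyInv P) :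
    FareyInv (l.foldl fareyStep P) := by
  induction l generalizing P with
  | nil => exact h
  | cons b t ih => exact ih _ (fareyStep_inv _ _ h)

lemma fareyTree_inv (l : List Bool) : FareyInv (fareyTree l) :=
  fareyFoldl_inv l _ ⟨by norm_num, one_pos, one_pos⟩

lemma fareyFoldl_sum (l : List Bool) (P : (ℕ × ℕ) × (ℕ × ℕ)) (h : FareyInv P) :
    P.1.2 + P.2.2 + l.length ≤ (l.foldl fareyStep P).1.2 + (l.foldl fareyStep P).2.2 := by
  induction l generalizing P with
  | nil => simp
  | cons b t ih =>
    have h' := fareyStep_inv P b h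
    have hle := ih (fareyStep P b) h'
    have hstep : P.1.2 + P.2.2 + 1 ≤ (fareyStep P b).1.2 + (fareyStep P b).2.2 := by
      obtain ⟨_, hb, hd⟩ := h
      cases b <;> simp [fareyStep] <;> omega
    simp only [List.foldl_cons, List.length_cons]
    omega

lemma fareyTree_sum (l : List Bool) :
    l.length + 2 ≤ (fareyTree l).1.2 + (fareyTree l).2.2 := by
  have := fareyFoldl_sum l ((0, 1), (1, 1)) ⟨by norm_num, one_pos, one_pos⟩
  simpa [fareyTree, add_comm] using this

lemma fareyTree_succ (σ : ℕ → Bool) (n : ℕ) :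
    fareyTree (List.ofFn fun i : Fin (n + 1) => σ i)
      = fareyStep (fareyTree (List.ofFn fun i : Fin n => σ i)) (σ n) := by
  have h : (List.ofFn fun i : Fin (n + 1) => σ i)
      = (List.ofFn fun i : Fin n => σ i) ++ [σ n] := by
    rw [List.ofFn_succ']
    simp [Function.comp]
  rw [h]
  simp [fareyTree, List.foldl_append]

/-- Determinant argument: a fraction strictly inside a Farey interval has large
denominator. -/
lemma middle_denom (a b c d p q : ℤ) (hb : 0 < b) (hd : 0 < d)
    (hdet : b * c = a * d + 1) (h1 : a * q < p * b) (h2 : p * d < c * q) :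
    b + d ≤ q := by
  have e1 : 1 ≤ p * b - a * q := by omega
  have e2 : 1 ≤ c * q - p * d := by omega
  have key : q = b * (c * q - p * d) + d * (p * b - a * q) := by
    have : b * (c * q - p * d) + d * (p * b - a * q) = q * (b * c - a * d) := by ring
    rw [this, show b * c - a * d = 1 by omega]
    ring
  nlinarith [mul_le_mul_of_nonneg_left e1 hd.le, mul_le_mul_of_nonneg_left e2 hb.le]

/-- For irrational `α ∈ (0,1)` with unique infinite path `σ`
through the Farey pair tree (all of whose intervals contain `α`), a reduced
fraction `p/q` is a left best approximant of `α` iff it occurs among the left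
endpoints of the Farey pairs along the path. -/
theorem left_best_approximants_eq_path (α : ℝ) (hirr : Irrational α)
    (h0 : 0 < α) (h1 : α < 1) (σ : ℕ → Bool)
    (hpath : ∀ n : ℕ,
      ((fareyTree (List.ofFn fun i : Fin n => σ i)).1.1 : ℝ) /
        ((fareyTree (List.ofFn fun i : Fin n => σ i)).1.2 : ℝ) < α ∧
      α < ((fareyTree (List.ofFn fun i : Fin n => σ i)).2.1 : ℝ) /
        ((fareyTree (List.ofFn fun i : Fin n => σ i)).2.2 : ℝ))
    (p q : ℕ) (hq : 0 < q) (hred : Nat.gcd p q = 1) :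
    ((p : ℝ) / q < α ∧
      ∀ c d : ℕ, 0 < d → d ≤ q → ((c : ℝ) / d ≤ (p : ℝ) / q ∨ α < (c : ℝ) / d)) ↔
    ∃ n : ℕ, (fareyTree (List.ofFn fun i : Fin n => σ i)).1 = (p, q) := by
  set T : ℕ → (ℕ × ℕ) × (ℕ × ℕ) := fun n => fareyTree (List.ofFn fun i : Fin n => σ i)
    with hT
  have hinv : ∀ n : ℕ, FareyInv (T n) := fun n => fareyTree_inv _
  have hsum : ∀ n : ℕ, n + 2 ≤ (T n).1.2 + (T n).2.2 := by
    intro n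
    have := fareyTree_sum (List.ofFn fun i : Fin n => σ i)
    simp only [List.length_ofFn] at this
    exact this
  have hsucc : ∀ k : ℕ, T (k + 1) = fareyStep (T k) (σ k) := fun k => fareyTree_succ σ k
  have hqR : (0 : ℝ) < (q : ℝ) := by exact_mod_cast hq
  -- key middle lemma specialized
  have middle : ∀ n : ℕ, ∀ x y : ℕ, 0 < y →
      ((T n).1.1 : ℝ) / ((T n).1.2 : ℝ) < (x : ℝ) / y →
      (x : ℝ) / y < ((T n).2.1 : ℝ) / ((T n).2.2 : ℝ) →
      (T n).1.2 + (T n).2.2 ≤ y := by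
    intro n x y hy hxy1 hxy2
    obtain ⟨hdet, hb, hd⟩ := hinv n
    have hbR : (0 : ℝ) < ((T n).1.2 : ℝ) := by exact_mod_cast hb
    have hdR : (0 : ℝ) < ((T n).2.2 : ℝ) := by exact_mod_cast hd
    have hyR : (0 : ℝ) < (y : ℝ) := by exact_mod_cast hy
    rw [div_lt_div_iff₀ hbR hyR] at hxy1
    rw [div_lt_div_iff₀ hyR hdR] at hxy2
    have i1 : ((T n).1.1 : ℤ) * y < x * (T n).1.2 := by exact_mod_cast hxy1
    have i2 : (x : ℤ) * (T n).2.2 < (T n).2.1 * y := by exact_mod_cast hxy2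
    have idet : ((T n).1.2 : ℤ) * (T n).2.1 = (T n).1.1 * (T n).2.2 + 1 := by
      exact_mod_cast hdet
    have := middle_denom ((T n).1.1) ((T n).1.2) ((T n).2.1) ((T n).2.2) x y
      (by exact_mod_cast hb) (by exact_mod_cast hd) idet i1 i2
    exact_mod_cast this
  constructor
  · rintro ⟨hlt, hbest⟩
    -- choose minimal m with q < b_m + d_m
    have hex : ∃ m : ℕ, q < (T m).1.2 + (T m).2.2 := ⟨q, by have := hsum q; omega⟩
    set m := Nat.find hex with hm
    have hspec : q < (T m).1.2 + (T m).2.2 := Nat.find_spec hex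
    -- b_m ≤ q
    have hbq : (T m).1.2 ≤ q := by
      rcases Nat.eq_zero_or_pos m with h0m | h0m
      · have hT0 : T 0 = ((0, 1), (1, 1)) := by simp [hT, fareyTree]
        rw [h0m, hT0]
        exact hq
      · obtain ⟨k, hk⟩ := Nat.exists_eq_succ_of_ne_zero h0m.ne'
        have hkm : ¬ q < (T k).1.2 + (T k).2.2 := Nat.find_min hex (by omega)
        rw [hk, hsucc k]
        obtain ⟨_, hbk, hdk⟩ := hinv k
        cases σ k <;> simp [fareyStep] <;> omega
    obtain ⟨hdet, hb, hd⟩ := hinv m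
    have hbR : (0 : ℝ) < ((T m).1.2 : ℝ) := by exact_mod_cast hb
    -- p/q ≤ a_m / b_m
    have hle : (p : ℝ) / q ≤ ((T m).1.1 : ℝ) / ((T m).1.2 : ℝ) := by
      by_contra hcon
      push_neg at hcon
      have h2 : (p : ℝ) / q < ((T m).2.1 : ℝ) / ((T m).2.2 : ℝ) :=
        hlt.trans (hpath m).2
      have := middle m p q hq hcon h2
      omega
    -- equality
    have heq : (p : ℝ) / q = ((T m).1.1 : ℝ) / ((T m).1.2 : ℝ) := by
      rcases lt_or_eq_of_le hle with hlt2 | h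
      · rcases hbest (T m).1.1 (T m).1.2 hb hbq with h | h
        · exact absurd (lt_of_le_of_lt h hlt2) (lt_irrefl _)
        · exact absurd ((hpath m).1.trans h) (lt_irrefl _)
      · exact h
    -- conclude p = a_m, q = b_m
    have hmul : p * (T m).1.2 = (T m).1.1 * q := by
      have := (div_eq_div_iff (ne_of_gt hqR) (ne_of_gt hbR)).mp heq
      exact_mod_cast this
    have hcop : Nat.Coprime (T m).1.1 (T m).1.2 := by
      have d1 : Nat.gcd (T m).1.1 (T m).1.2 ∣ (T m).1.2 * (T m).2.1 :=
        Dvd.dvd.mul_right (Nat.gcd_dvd_right _ _) _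
      have d2 : Nat.gcd (T m).1.1 (T m).1.2 ∣ (T m).1.1 * (T m).2.2 :=
        Dvd.dvd.mul_right (Nat.gcd_dvd_left _ _) _
      rw [hdet] at d1
      have : Nat.gcd (T m).1.1 (T m).1.2 ∣ 1 := by
        have := Nat.dvd_sub d1 d2
        simpa using this
      exact Nat.dvd_one.mp this
    have hq_dvd : q ∣ (T m).1.2 := by
      have : q ∣ p * (T m).1.2 := by rw [hmul]; exact Dvd.dvd.mul_left (dvd_refl q) _
      exact Nat.Coprime.dvd_of_dvd_mul_left (Nat.Coprime.symm hred) this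
    have hb_dvd : (T m).1.2 ∣ q := by
      have : (T m).1.2 ∣ (T m).1.1 * q := by
        rw [← hmul]; exact Dvd.dvd.mul_left (dvd_refl _) _
      exact Nat.Coprime.dvd_of_dvd_mul_left (Nat.Coprime.symm hcop) this
    have hqb : q = (T m).1.2 := Nat.dvd_antisymm hq_dvd hb_dvd
    have hpa : p = (T m).1.1 := by
      have : p * q = (T m).1.1 * q := by rw [hqb] at hmul ⊢; exact hmul
      exact Nat.eq_of_mul_eq_mul_right hq this
    exact ⟨m, by rw [Prod.ext_iff]; exact ⟨hpa.symm, hqb.symm⟩⟩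
  · rintro ⟨n, hn⟩
    obtain ⟨hdet, hb, hd⟩ := hinv n
    have hn' : (T n).1 = (p, q) := hn
    have hpq1 : ((T n).1.1 : ℝ) = (p : ℝ) := by rw [hn']
    have hpq2 : ((T n).1.2 : ℝ) = (q : ℝ) := by rw [hn']
    constructor
    · have := (hpath n).1
      rwa [show ((fareyTree (List.ofFn fun i : Fin n => σ i)).1.1 : ℝ) /
          ((fareyTree (List.ofFn fun i : Fin n => σ i)).1.2 : ℝ)
          = ((T n).1.1 : ℝ) / ((T n).1.2 : ℝ) from rfl, hpq1, hpq2] at this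
    · intro c d hdpos hdq
      by_cases hcd : (c : ℝ) / d ≤ (p : ℝ) / q
      · exact Or.inl hcd
      · push_neg at hcd
        right
        by_contra hcon
        push_neg at hcon
        have hne : (c : ℝ) / d ≠ α := by
          intro h
          apply hirr
          exact ⟨(c : ℚ) / (d : ℚ), by push_cast; exact h⟩
        have hlt2 : (c : ℝ) / d < α := lt_of_le_of_ne hcon hne
        have h2 : (c : ℝ) / d < ((T n).2.1 : ℝ) / ((T n).2.2 : ℝ) :=
          hlt2.trans (hpath n).2
        have h1 : ((T n).1.1 : ℝ) / ((T n).1.2 : ℝ) < (c : ℝ) / d := by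
          rw [hpq1, hpq2]; exact hcd
        have hmid := middle n c d hdpos h1 h2
        have hq_eq : (T n).1.2 = q := by rw [hn']
        omega
end

section
/- Let x, y ∈ (0,1) with x < y, and let E^x and E^y be their (possibly infinite) Egyptian fraction expansions, viewed as sequences in ℕ ∪ {∞} (with missing terms set to ∞ for finite expansions). Then E^x strictly precedes E^y in lexicographic order with respect to the reversed order on ℕ ∪ {∞} (i.e., at the first position where they differ, the entry of E^x is larger than that of E^y, interpreting ∞ as the smallest value). -/
open Finset

private lemma egy_term_nonneg (E : ℕ → ℕ) (i : ℕ) :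
    0 ≤ (∏ j ∈ Finset.range (i + 1), (E j : ℝ))⁻¹ :=
  inv_nonneg.2 (Finset.prod_nonneg fun j _ => Nat.cast_nonneg _)

private lemma egy_summable (E : ℕ → ℕ) (h2 : ∀ i, E i ≠ 0 → 2 ≤ E i) :
    Summable (fun i => (∏ j ∈ Finset.range (i + 1), (E j : ℝ))⁻¹) := by
  apply Summable.of_nonneg_of_le (egy_term_nonneg E) (fun i => ?_)
    (summable_geometric_of_lt_one (by norm_num) (by norm_num : (1/2:ℝ) < 1))
  by_cases h : ∀ j ∈ Finset.range (i+1), E j ≠ 0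
  · have hprod : (2:ℝ)^(i+1) ≤ ∏ j ∈ Finset.range (i+1), (E j : ℝ) := by
      calc (2:ℝ)^(i+1) = ∏ _j ∈ Finset.range (i+1), (2:ℝ) := by
              rw [Finset.prod_const, Finset.card_range]
        _ ≤ ∏ j ∈ Finset.range (i+1), (E j : ℝ) :=
              Finset.prod_le_prod (fun j _ => by norm_num)
                (fun j hj => by exact_mod_cast h2 j (h j hj))
    have h1 : (∏ j ∈ Finset.range (i+1), (E j : ℝ))⁻¹ ≤ ((2:ℝ)^(i+1))⁻¹ :=
      inv_anti₀ (by positivity) hprod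
    refine h1.trans ?_
    rw [one_div, inv_pow]
    exact inv_anti₀ (by positivity) (pow_le_pow_right₀ (by norm_num) (by omega))
  · push_neg at h
    obtain ⟨j, hj, hj0⟩ := h
    rw [Finset.prod_eq_zero hj (by exact_mod_cast hj0), inv_zero]
    positivity

private lemma egy_mono (E : ℕ → ℕ) (hmono : ∀ i, E (i+1) ≠ 0 → E i ≤ E (i+1))
    (hterm : ∀ i, E i = 0 → E (i+1) = 0) :
    ∀ n m, m ≤ n → E n ≠ 0 → E m ≤ E n := by
  intro n
  induction n with
  | zero => intro m hm _; rw [Nat.le_zero.1 hm]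
  | succ n ih =>
    intro m hm h0
    rcases Nat.eq_or_lt_of_le hm with h | h
    · rw [h]
    · have hn0 : E n ≠ 0 := fun hz => h0 (hterm n hz)
      exact le_trans (ih m (by omega) hn0) (hmono n h0)

private lemma egy_tail_le (E : ℕ → ℕ) (h2 : ∀ i, E i ≠ 0 → 2 ≤ E i)
    (hmono : ∀ i, E (i+1) ≠ 0 → E i ≤ E (i+1))
    (hterm : ∀ i, E i = 0 → E (i+1) = 0) (n : ℕ) (ha : E n ≠ 0) :
    ∑' k : ℕ, (∏ j ∈ Finset.range (k + n + 1), (E j : ℝ))⁻¹ ≤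
      (∏ j ∈ Finset.range n, (E j : ℝ))⁻¹ * ((E n : ℝ) - 1)⁻¹ := by
  have ha2 : 2 ≤ E n := h2 n ha
  have haR : (2:ℝ) ≤ (E n : ℝ) := by exact_mod_cast ha2
  set r : ℝ := ((E n : ℝ))⁻¹ with hr
  have hr0 : 0 ≤ r := by positivity
  have hr1 : r < 1 := by
    rw [hr]
    rw [inv_lt_one_iff₀]
    right; linarith
  set P : ℝ := (∏ j ∈ Finset.range n, (E j : ℝ))⁻¹ with hP
  have hP0 : 0 ≤ P := inv_nonneg.2 (Finset.prod_nonneg fun j _ => Nat.cast_nonneg _)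
  have hgeo : Summable (fun k : ℕ => r ^ k) := summable_geometric_of_lt_one hr0 hr1
  have hgeo1 : Summable (fun k : ℕ => r ^ (k+1)) := by
    have := (summable_nat_add_iff 1).2 hgeo
    simpa using this
  have hrhs : Summable (fun k : ℕ => P * r ^ (k+1)) := hgeo1.mul_left P
  have hterms : ∀ k : ℕ, (∏ j ∈ Finset.range (k + n + 1), (E j : ℝ))⁻¹ ≤ P * r ^ (k+1) := by
    intro k
    have hsplit : (k + n + 1) = n + (k + 1) := by ring
    rw [hsplit, Finset.prod_range_add]
    by_cases h : ∀ i ∈ Finset.range (k+1), E (n + i) ≠ 0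
    · have hMa : ((E n : ℝ))^(k+1) ≤ ∏ i ∈ Finset.range (k+1), (E (n+i) : ℝ) := by
        calc ((E n : ℝ))^(k+1) = ∏ _i ∈ Finset.range (k+1), (E n : ℝ) := by
                rw [Finset.prod_const, Finset.card_range]
          _ ≤ ∏ i ∈ Finset.range (k+1), (E (n+i) : ℝ) :=
                Finset.prod_le_prod (fun i _ => by positivity)
                  (fun i hi => by
                    exact_mod_cast egy_mono E hmono hterm (n+i) n (by omega) (h i hi))
      have hMpos : (0:ℝ) < ∏ i ∈ Finset.range (k+1), (E (n+i) : ℝ) :=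
        lt_of_lt_of_le (by positivity) hMa
      rw [mul_inv]
      refine mul_le_mul_of_nonneg_left ?_ hP0
      have := inv_anti₀ (by positivity : (0:ℝ) < ((E n : ℝ))^(k+1)) hMa
      rwa [← inv_pow] at this
    · push_neg at h
      obtain ⟨i, hi, hi0⟩ := h
      rw [Finset.prod_eq_zero hi (by exact_mod_cast hi0), mul_zero, inv_zero]
      positivity
  have hsumL : Summable (fun k : ℕ => (∏ j ∈ Finset.range (k + n + 1), (E j : ℝ))⁻¹) := by
    have := (summable_nat_add_iff n).2 (egy_summable E h2)
    simpa using this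
  calc ∑' k : ℕ, (∏ j ∈ Finset.range (k + n + 1), (E j : ℝ))⁻¹
      ≤ ∑' k : ℕ, P * r ^ (k+1) := Summable.tsum_le_tsum hterms hsumL hrhs
    _ = P * ∑' k : ℕ, r ^ (k+1) := tsum_mul_left
    _ = P * (r * ∑' k : ℕ, r ^ k) := by
        congr 1
        simp_rw [pow_succ, mul_comm]
        exact tsum_mul_left
    _ = P * ((E n : ℝ) - 1)⁻¹ := by
        rw [tsum_geometric_of_lt_one hr0 hr1]
        congr 1
        rw [hr]
        have h0 : (E n : ℝ) ≠ 0 := by linarith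
        have h1 : (E n : ℝ) - 1 ≠ 0 := by intro h; apply h0; nlinarith
        field_simp

/-- `E : ℕ → ℕ` (with `E i` standing for the `(i+1)`-st entry, and `0` encoding `∞`,
i.e. a terminated expansion) is the Egyptian fraction expansion of `x`:
entries are `≥ 2` while finite, nondecreasing, terminated forever once terminated,
and `x = Σ_i (Π_{j≤i} E j)⁻¹` (terms past termination vanish since `(0:ℝ)⁻¹ = 0`). -/
def IsEgyptianExpansion (E : ℕ → ℕ) (x : ℝ) : Prop :=
  (∀ i, E i ≠ 0 → 2 ≤ E i) ∧
  (∀ i, E (i + 1) ≠ 0 → E i ≤ E (i + 1)) ∧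
  (∀ i, E i = 0 → E (i + 1) = 0) ∧
  x = ∑' i : ℕ, (∏ j ∈ Finset.range (i + 1), (E j : ℝ))⁻¹

/-- If `x < y` in `(0,1)` have Egyptian fraction expansions
`Ex`, `Ey`, then at the first position where they differ, the entry of `Ex` is
larger than that of `Ey` (where a terminated entry `∞`, encoded by `0`, counts
as the largest value): either `Ex` has terminated and `Ey` has not, or both are
finite with `Ey n < Ex n`. -/
theorem egyptian_lex (x y : ℝ) (hx0 : 0 < x) (hy1 : y < 1) (hxy : x < y)
    (Ex Ey : ℕ → ℕ)
    (hEx : IsEgyptianExpansion Ex x) (hEy : IsEgyptianExpansion Ey y) :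
    ∃ n : ℕ, (∀ i < n, Ex i = Ey i) ∧
      ((Ex n = 0 ∧ Ey n ≠ 0) ∨ (Ex n ≠ 0 ∧ Ey n ≠ 0 ∧ Ey n < Ex n)) := by
  obtain ⟨hx2, hxmono, hxterm, hxsum⟩ := hEx
  obtain ⟨hy2, hymono, hyterm, hysum⟩ := hEy
  have hexists : ∃ n, Ex n ≠ Ey n := by
    by_contra h
    push_neg at h
    have hEq : Ex = Ey := funext h
    rw [hxsum, hysum, hEq] at hxy
    exact lt_irrefl _ hxy
  set n := Nat.find hexists with hn
  have hne : Ex n ≠ Ey n := Nat.find_spec hexists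
  have hagree : ∀ i < n, Ex i = Ey i := fun i hi => not_not.1 (Nat.find_min hexists hi)
  refine ⟨n, hagree, ?_⟩
  have hsx := egy_summable Ex hx2
  have hsy := egy_summable Ey hy2
  have hprefix : ∑ i ∈ Finset.range n, (∏ j ∈ Finset.range (i + 1), (Ex j : ℝ))⁻¹
      = ∑ i ∈ Finset.range n, (∏ j ∈ Finset.range (i + 1), (Ey j : ℝ))⁻¹ := by
    refine Finset.sum_congr rfl (fun i hi => ?_)
    congr 1
    refine Finset.prod_congr rfl (fun j hj => ?_)
    rw [hagree j (by simp at hi hj; omega)]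
  have hsplitx := Summable.sum_add_tsum_nat_add n hsx
  have hsplity := Summable.sum_add_tsum_nat_add n hsy
  set Tx := ∑' i : ℕ, (∏ j ∈ Finset.range (i + n + 1), (Ex j : ℝ))⁻¹ with hTx
  set Ty := ∑' i : ℕ, (∏ j ∈ Finset.range (i + n + 1), (Ey j : ℝ))⁻¹ with hTy
  have hxeq : x = ∑ i ∈ Finset.range n, (∏ j ∈ Finset.range (i + 1), (Ex j : ℝ))⁻¹ + Tx := by
    rw [hxsum, ← hsplitx]
  have hyeq : y = ∑ i ∈ Finset.range n, (∏ j ∈ Finset.range (i + 1), (Ey j : ℝ))⁻¹ + Ty := by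
    rw [hysum, ← hsplity]
  have htail : Tx < Ty := by
    rw [hxeq, hyeq, hprefix] at hxy
    linarith
  have hsxT : Summable (fun i : ℕ => (∏ j ∈ Finset.range (i + n + 1), (Ex j : ℝ))⁻¹) := by
    have := (summable_nat_add_iff n).2 hsx
    simpa using this
  have hTxnn : 0 ≤ Tx := tsum_nonneg (fun i => egy_term_nonneg Ex _)
  have hyn : Ey n ≠ 0 := by
    intro h0
    have hTy0 : Ty = 0 := by
      rw [hTy]
      convert tsum_zero with i
      rw [Finset.prod_eq_zero (i := n) (by simp) (by exact_mod_cast h0), inv_zero]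
    rw [hTy0] at htail
    linarith
  by_cases hxn : Ex n = 0
  · exact Or.inl ⟨hxn, hyn⟩
  · refine Or.inr ⟨hxn, hyn, ?_⟩
    by_contra hlt
    push_neg at hlt
    have hab : Ex n < Ey n := lt_of_le_of_ne hlt hne
    set P : ℝ := (∏ j ∈ Finset.range n, (Ey j : ℝ))⁻¹ with hP
    have hP0 : 0 ≤ P := inv_nonneg.2 (Finset.prod_nonneg fun j _ => Nat.cast_nonneg _)
    have hTyle : Ty ≤ P * ((Ey n : ℝ) - 1)⁻¹ := egy_tail_le Ey hy2 hymono hyterm n hyn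
    have h2a : 2 ≤ Ex n := hx2 n hxn
    have hcast : (Ex n : ℝ) ≤ (Ey n : ℝ) - 1 := by
      have : Ex n + 1 ≤ Ey n := hab
      have := (Nat.cast_le (α := ℝ)).2 this
      push_cast at this
      linarith
    have hstep : P * ((Ey n : ℝ) - 1)⁻¹ ≤ P * ((Ex n : ℝ))⁻¹ := by
      refine mul_le_mul_of_nonneg_left ?_ hP0
      apply inv_anti₀
      · exact_mod_cast Nat.pos_of_ne_zero hxn
      · exact hcast
    have hTxge : P * ((Ex n : ℝ))⁻¹ ≤ Tx := by
      have h0 : (∏ j ∈ Finset.range (0 + n + 1), (Ex j : ℝ))⁻¹ ≤ Tx :=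
        Summable.le_tsum hsxT 0 (fun i _ => egy_term_nonneg Ex _)
      have hpe : (∏ j ∈ Finset.range (0 + n + 1), (Ex j : ℝ))⁻¹ = P * ((Ex n : ℝ))⁻¹ := by
        rw [zero_add, Finset.prod_range_succ, mul_inv, hP]
        congr 2
        refine Finset.prod_congr rfl (fun j hj => ?_)
        rw [hagree j (by simpa using hj)]
      rw [← hpe]; exact h0
    linarith
end

section
/- Let α ∈ (0,1) be irrational and let r_0 < r_1 < r_2 < … be its complete left best approximation (the increasing enumeration of all left best approximants of α, with r_0 = 0). Then for every i, r_{i+1} − r_i > r_{i+2} − r_{i+1}, i.e., the gaps between consecutive complete left best approximants are strictly decreasing. -/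
/-!
Two consecutive complete left best approximants `x < y` of `α` are Farey neighbours,
`y - x = 1 / (x.den * y.den)`. Indeed, denominators increase along the sequence, and no fraction
`w ∈ (x, y)` has `w.den < y.den`: otherwise the largest fraction in `(x, α)` with denominator at
most `w.den` would be a left best approximant strictly between `x` and `y`. Since the
denominators increase, the gaps `1 / (x.den * y.den)` decrease.
-/

namespace Rat

theorem den_intCast_div_le {n d : ℤ} (hd : 0 < d) : (((n : ℚ) / d).den : ℤ) ≤ d :=
  Int.le_of_dvd hd (by rw [← divInt_eq_div]; exact den_dvd n d)

theorem finite_setOf_abs_le_den_le (M D : ℕ) : {w : ℚ | |w| ≤ M ∧ w.den ≤ D}.Finite := by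
  refine ((Set.finite_Icc (-(M * D : ℤ)) (M * D)).prod (Set.finite_Iic D)).preimage
    (f := fun w : ℚ => (w.num, w.den)) (fun v _ w _ h => Rat.ext (congrArg Prod.fst h)
      (congrArg Prod.snd h)) |>.subset ?_
  rintro w ⟨hwM, hwD⟩
  have hnum : (|w.num| : ℚ) ≤ M * D := by
    rw [← Rat.mul_den_eq_num, abs_mul, Nat.abs_cast]
    exact mul_le_mul hwM (by exact_mod_cast hwD) (by positivity) (by positivity)
  exact ⟨abs_le.1 (by exact_mod_cast hnum), hwD⟩

theorem exists_num_mul_sub_den_mul_eq_one (y : ℚ) (hy : 1 < y.den) :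
    ∃ p q : ℤ, 0 < q ∧ q < y.den ∧ y.num * q - y.den * p = 1 := by
  obtain ⟨u, v, huv⟩ : IsCoprime y.num y.den := Int.isCoprime_iff_gcd_eq_one.2 y.reduced
  have hpq : y.num * (u % y.den) - y.den * (-v - y.num * (u / y.den)) = 1 := by
    linear_combination y.num * Int.emod_add_mul_ediv u y.den + huv
  refine ⟨_, u % y.den, (Int.emod_nonneg u (by omega)).lt_of_ne fun h => ?_,
    Int.emod_lt_of_pos u (by omega), hpq⟩
  have : (y.den : ℤ) ∣ 1 := ⟨v + y.num * (u / y.den), by linear_combination -hpq - y.num * h⟩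
  have := Int.le_of_dvd one_pos this
  omega

theorem num_mul_den_sub_num_mul_den_eq_one {x y : ℚ} (hxy : x < y) (hden : x.den < y.den)
    (hgap : ∀ w : ℚ, x < w → w < y → y.den ≤ w.den) : y.num * x.den - x.num * y.den = 1 := by
  have hk : x.num * y.den < y.num * x.den := (Rat.lt_iff x y).1 hxy
  obtain ⟨p, q, hq, hqy, hpq⟩ := exists_num_mul_sub_den_mul_eq_one y (by have := x.pos; omega)
  have hpqy : (p : ℚ) / q < y := by
    rw [← Rat.num_div_den y, div_lt_div_iff₀ (by exact_mod_cast hq) (by exact_mod_cast y.pos)]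
    exact_mod_cast (by linarith : p * y.den < y.num * q)
  have hpqx : (p : ℚ) / q ≤ x := not_lt.1 fun h => by
    have := hgap _ h hpqy
    have := den_intCast_div_le (n := p) hq
    omega
  rw [← Rat.num_div_den x, div_le_div_iff₀ (by exact_mod_cast hq) (by exact_mod_cast x.pos)]
    at hpqx
  have hs : x.den * p ≤ x.num * q := by rw [mul_comm]; exact_mod_cast hpqx
  -- `x.den = s * y.den + k * q` with `s ≥ 0` and `k ≥ 1` the two determinants; as
  -- `x.den < y.den` this forces `s = 0`, i.e. `x = p / q`, and then `x.den ≤ q` forces `k = 1`.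
  have hsum : (x.num * q - x.den * p) * y.den + (y.num * x.den - x.num * y.den) * q = x.den := by
    linear_combination x.den * hpq
  have hs0 : x.num * q = x.den * p := by
    by_contra hne
    have : 1 ≤ x.num * q - x.den * p := by omega
    nlinarith [mul_pos hq (sub_pos.2 hk)]
  have hxpq : x = (p : ℚ) / q := by
    rw [← Rat.num_div_den x,
      div_eq_div_iff (by exact_mod_cast x.pos.ne') (by exact_mod_cast hq.ne')]
    exact_mod_cast (by linarith : x.num * q = p * x.den)
  have := den_intCast_div_le (n := p) hq
  rw [← hxpq] at this
  nlinarith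

theorem sub_eq_one_div_of_num_mul_den_sub_num_mul_den_eq_one {x y : ℚ}
    (h : y.num * x.den - x.num * y.den = 1) : y - x = 1 / (x.den * y.den) := by
  rw [Rat.sub_def', h, Rat.mkRat_eq_div]
  push_cast
  ring

end Rat

def IsLeftBestApprox (α : ℝ) (x : ℚ) : Prop :=
  0 ≤ x ∧ (x : ℝ) < α ∧
    ∀ c d : ℕ, 0 < d → d ≤ x.den → (c : ℝ) / d ≤ (x : ℝ) ∨ α < (c : ℝ) / d

theorem isLeftBestApprox_iff {α : ℝ} {x : ℚ} : IsLeftBestApprox α x ↔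
    0 ≤ x ∧ (x : ℝ) < α ∧ ∀ w : ℚ, 0 ≤ w → w.den ≤ x.den → w ≤ x ∨ α < w := by
  refine and_congr_right fun _ => and_congr_right fun _ =>
    ⟨fun h w hw hwx => ?_, fun h c d hd hdx => ?_⟩
  · have hcast : ((w.num.toNat : ℕ) : ℝ) / (w.den : ℕ) = w := by
      rw [Rat.cast_def]
      congr 1
      exact_mod_cast Int.toNat_of_nonneg (Rat.num_nonneg.2 hw)
    rcases h _ _ w.pos hwx with h' | h' <;> rw [hcast] at h'
    · exact Or.inl (by exact_mod_cast h')
    · exact Or.inr h'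
  · have hden : (((c : ℤ) : ℚ) / (d : ℤ)).den ≤ d := by
      exact_mod_cast Rat.den_intCast_div_le (n := c) (d := d) (by exact_mod_cast hd)
    have hcast : ((((c : ℤ) : ℚ) / (d : ℤ) : ℚ) : ℝ) = (c : ℝ) / d := by push_cast; rfl
    rcases h _ (by positivity) (hden.trans hdx) with h' | h'
    · exact Or.inl (hcast ▸ Rat.cast_le.2 h')
    · exact Or.inr (hcast ▸ h')

theorem IsLeftBestApprox.den_lt_den {α : ℝ} {x y : ℚ} (hx : IsLeftBestApprox α x)
    (hy : IsLeftBestApprox α y) (hxy : x < y) : x.den < y.den := by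
  by_contra! h
  rcases (isLeftBestApprox_iff.1 hx).2.2 y hy.1 h with hyx | hαy
  · exact hyx.not_gt hxy
  · exact hαy.not_gt hy.2.1

theorem exists_isLeftBestApprox_between {α : ℝ} (hα : Irrational α) {x z : ℚ} (hx : 0 ≤ x)
    (hxz : x < z) (hzα : (z : ℝ) < α) : ∃ q, IsLeftBestApprox α q ∧ x < q ∧ q.den ≤ z.den := by
  let S := {w : ℚ | x < w ∧ (w : ℝ) < α ∧ w.den ≤ z.den}
  have hS : S.Finite := (Rat.finite_setOf_abs_le_den_le ⌈α⌉₊ z.den).subset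
    fun w ⟨hxw, hwα, hw⟩ => ⟨abs_le.2 ⟨by linarith [(Nat.cast_nonneg ⌈α⌉₊ : (0 : ℚ) ≤ _)],
      by exact_mod_cast hwα.le.trans (Nat.le_ceil α)⟩, hw⟩
  obtain ⟨q, ⟨hxq, hqα, hqz⟩, hmax⟩ := Set.exists_max_image S id hS ⟨z, hxz, hzα, le_rfl⟩
  refine ⟨q, isLeftBestApprox_iff.2 ⟨hx.trans hxq.le, hqα, fun w _ hwq => ?_⟩, hxq, hqz⟩
  by_contra! h
  have hwα : (w : ℝ) < α := h.2.lt_of_ne (hα.ne_rat w).symm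
  exact (hmax w ⟨hxq.trans h.1, hwα, hwq.trans hqz⟩).not_gt h.1

theorem complete_left_best_gaps_general (α : ℝ) (hirr : Irrational α)
    (r : ℕ → ℚ) (hmono : StrictMono r)
    (hlba : ∀ i : ℕ, 0 ≤ r i ∧ ((r i : ℝ) < α) ∧
      ∀ c d : ℕ, 0 < d → d ≤ (r i).den → ((c : ℝ) / d ≤ ((r i : ℚ) : ℝ) ∨ α < (c : ℝ) / d))
    (hcomplete : ∀ x : ℚ, 0 ≤ x → (x : ℝ) < α →
      (∀ c d : ℕ, 0 < d → d ≤ x.den → ((c : ℝ) / d ≤ (x : ℝ) ∨ α < (c : ℝ) / d)) →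
      ∃ i, r i = x) :
    ∀ i : ℕ, r (i + 2) - r (i + 1) < r (i + 1) - r i := by
  have hden : StrictMono fun i => (r i).den := fun i j hij =>
    IsLeftBestApprox.den_lt_den (hlba i) (hlba j) (hmono hij)
  have hgap (i : ℕ) : r (i + 1) - r i = 1 / ((r i).den * (r (i + 1)).den) := by
    refine Rat.sub_eq_one_div_of_num_mul_den_sub_num_mul_den_eq_one <|
      Rat.num_mul_den_sub_num_mul_den_eq_one (hmono i.lt_succ_self) (hden i.lt_succ_self)
        fun w hiw hwi => ?_
    by_contra! hw
    obtain ⟨q, hq, hiq, hqw⟩ := exists_isLeftBestApprox_between hirr (hlba i).1 hiw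
      ((Rat.cast_lt.2 hwi).trans (hlba (i + 1)).2.1)
    obtain ⟨j, rfl⟩ := hcomplete q hq.1 hq.2.1 hq.2.2
    have : (r (i + 1)).den ≤ (r j).den := hden.monotone (hmono.lt_iff_lt.1 hiq)
    omega
  intro i
  rw [hgap, hgap]
  have : ((r i).den : ℚ) < (r (i + 2)).den := by exact_mod_cast hden (by omega : i < i + 2)
  apply one_div_lt_one_div_of_lt (by positivity)
  rw [mul_comm]
  gcongr

/-- Let `r 0 < r 1 < r 2 < …` be the complete left best
approximation of an irrational `α ∈ (0,1)` (the increasing enumeration of all left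
best approximants, with `r 0 = 0`). Then the gaps between consecutive terms are
strictly decreasing: `r (i+2) - r (i+1) < r (i+1) - r i`. -/
theorem complete_left_best_gaps (α : ℝ) (hirr : Irrational α) (h0 : 0 < α) (h1 : α < 1)
    (r : ℕ → ℚ) (hmono : StrictMono r) (hr0 : r 0 = 0)
    (hlba : ∀ i : ℕ, 0 ≤ r i ∧ ((r i : ℝ) < α) ∧
      ∀ c d : ℕ, 0 < d → d ≤ (r i).den → ((c : ℝ) / d ≤ ((r i : ℚ) : ℝ) ∨ α < (c : ℝ) / d))
    (hcomplete : ∀ x : ℚ, 0 ≤ x → (x : ℝ) < α →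
      (∀ c d : ℕ, 0 < d → d ≤ x.den → ((c : ℝ) / d ≤ (x : ℝ) ∨ α < (c : ℝ) / d)) →
      ∃ i, r i = x) :
    ∀ i : ℕ, r (i + 2) - r (i + 1) < r (i + 1) - r i :=
  complete_left_best_gaps_general α hirr r hmono hlba hcomplete
end
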